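/- Let f ∈ G(M²), i.e., an A-diffeomorphism of a closed orientable surface whose non-wandering set consists of finitely many one-dimensional basic sets (attractors and repellers). Then the non-wandering set of f contains at least one attractor and at least one repeller. -/

import Mathlib

/-!
By Baire's theorem the finitely many nowhere dense basic sets cannot cover the surface. If
there were no repeller, every basic set would be an attractor, equal to its own unstable
manifold, and the unstable manifolds would cover the surface; symmetrically with stable
manifolds if there were no attractor.
-/

open Set

theorem iUnion_ne_univ_of_isNowhereDense {X ι : Type*} [TopologicalSpace X] [BaireSpace X]
    [Nonempty X] [Countable ι] {s : ι → Set X} (hs : ∀ i, IsNowhereDense (s i)) :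
    ⋃ i, s i ≠ univ := fun h =>
  not_isMeagre_of_isOpen isOpen_univ univ_nonempty
    (h ▸ isMeagre_iUnion fun i => (hs i).isMeagre)

theorem exists_not_of_iUnion_eq_univ {X ι : Type*} {s t : ι → Set X} {p : ι → Prop}
    (hs : ⋃ i, s i ≠ univ) (ht : ⋃ i, t i = univ) (hts : ∀ i, p i → t i = s i) :
    ∃ i, ¬ p i := by
  by_contra! hp
  exact hs (ht ▸ iUnion_congr fun i => (hts i (hp i)).symm)

theorem stmt10_general {M : Type*} [MetricSpace M] [CompactSpace M] [Nonempty M]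
    (k : ℕ) (Λ Wu Ws : Fin k → Set M)
    (isAttr : Fin k → Prop)
    (hnd : ∀ i, IsNowhereDense (Λ i))
    (hattr : ∀ i, isAttr i → Wu i = Λ i)
    (hrep : ∀ i, ¬ isAttr i → Ws i = Λ i)
    (hcoverU : (⋃ i, Wu i) = Set.univ)
    (hcoverS : (⋃ i, Ws i) = Set.univ) :
    (∃ i, isAttr i) ∧ (∃ j, ¬ isAttr j) := by
  have hΛ : ⋃ i, Λ i ≠ univ := iUnion_ne_univ_of_isNowhereDense hnd
  obtain ⟨i, hi⟩ := exists_not_of_iUnion_eq_univ hΛ hcoverS hrep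
  exact ⟨⟨i, not_not.mp hi⟩, exists_not_of_iUnion_eq_univ hΛ hcoverU hattr⟩

/-- Let `f ∈ G(M²)`: an A-diffeomorphism of a closed orientable surface whose
non-wandering set consists of finitely many one-dimensional basic sets `Λ₁, …, Λ_k`,
each an attractor or a repeller. Each basic set is closed, nowhere dense, invariant;
an attractor satisfies `Λ = W^u(Λ)` and a repeller `Λ = W^s(Λ)`; and the surface is
the union of the unstable manifolds, and also of the stable manifolds, of the basic
sets. Then the non-wandering set contains at least one attractor and at least one
repeller. -/
theorem stmt10 {M : Type*} [MetricSpace M] [CompactSpace M] [Nonempty M]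
    [ChartedSpace (EuclideanSpace ℝ (Fin 2)) M]
    (f : M ≃ₜ M) (k : ℕ) (Λ Wu Ws : Fin k → Set M)
    (isAttr : Fin k → Prop)
    (hinv : ∀ i, f '' Λ i = Λ i)
    (hclosed : ∀ i, IsClosed (Λ i))
    (hnd : ∀ i, IsNowhereDense (Λ i))
    (hdisj : Pairwise (Function.onFun Disjoint Λ))
    (hattr : ∀ i, isAttr i → Wu i = Λ i)
    (hrep : ∀ i, ¬ isAttr i → Ws i = Λ i)
    (hcoverU : (⋃ i, Wu i) = Set.univ)
    (hcoverS : (⋃ i, Ws i) = Set.univ) :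
    (∃ i, isAttr i) ∧ (∃ j, ¬ isAttr j) :=
  stmt10_general k Λ Wu Ws isAttr hnd hattr hrep hcoverU hcoverS
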